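/- Let n, d be integers with d ≥ 2 and n ≥ d + 2, and let M(n,d) be the (n,d)-circulant matrix. Then two distinct columns j, k ∈ ℤ/nℤ of M(n,d) have exactly d − 1 common ones (i.e., the number of rows i with m_{ij} = m_{ik} = 1 equals d − 1) if and only if k = j + 1 or k = j − 1 in ℤ/nℤ. Consequently, the graph on ℤ/nℤ whose edges are the pairs of distinct columns with exactly d − 1 common ones is the n-cycle. -/

import Mathlib

open Finset

/-- The `(n,d)`-circulant matrix `M(n,d)` with rows and columns indexed by `ZMod n`
(encoded with `Bool` entries): the entry at `(i, j)` is `1` iff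
`j ∈ {i, i+1, …, i+d-1}` (indices mod `n`). -/
def Mcirc (n d : ℕ) [NeZero n] (i j : ZMod n) : Bool := decide ((j - i).val < d)

/-- The `n`-cycle on `ZMod n`: `j` and `k` are adjacent iff `k = j ± 1`. -/
def zmodCycle (n : ℕ) : SimpleGraph (ZMod n) where
  Adj j k := j ≠ k ∧ (k = j + 1 ∨ k = j - 1)
  symm := ⟨by
    rintro j k ⟨h, h1 | h1⟩
    · exact ⟨h.symm, Or.inr (by rw [h1]; ring)⟩
    · exact ⟨h.symm, Or.inl (by rw [h1]; ring)⟩⟩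
  loopless := ⟨fun j h => h.1 rfl⟩

/-- The graph on the column indices of a matrix `A` indexed by `ZMod n`:
two distinct columns are adjacent iff they have exactly `d - 1` common ones. -/
def gammaZ (n d : ℕ) [NeZero n] (A : ZMod n → ZMod n → Bool) : SimpleGraph (ZMod n) where
  Adj j k := j ≠ k ∧ (univ.filter (fun i => A i j ∧ A i k)).card = d - 1
  symm := ⟨by
    rintro j k ⟨hjk, hcard⟩
    refine ⟨hjk.symm, ?_⟩
    rw [← hcard]
    congr 1
    ext i
    simp [and_comm]⟩
  loopless := ⟨fun j h => h.1 rfl⟩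

/-!
Column `j` of `M(n,d)` has its ones in the rows `j - u` with `u.val < d`, so after the shift
`i ↦ j - i` the common ones of columns `j` and `k` are the `u` with `u.val < d` and
`(u + t).val < d`, where `t = k - j`. As residues in `[0, n)` these form the two intervals
`[0, d - t)` and `[n - t, d)`, giving `(d - t) + (d - (n - t))` common ones. If `n ≥ d + 2`,
this count is `d - 1` for `t = 1` and `t = n - 1`, and at most `d - 2` for `2 ≤ t ≤ n - 2`.
-/

lemma Nat.filter_range_lt_and_add_mod_lt {n d a : ℕ} (hdn : d ≤ n) (ha : a < n) :
    {x ∈ range n | x < d ∧ (x + a) % n < d} = range (d - a) ∪ Ico (n - a) d := by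
  ext x
  simp only [mem_filter, mem_range, mem_union, mem_Ico]
  by_cases hwrap : x + a < n
  · rw [Nat.mod_eq_of_lt hwrap]
    omega
  · by_cases hx : x < n
    · rw [Nat.mod_eq_sub_mod (by omega), Nat.mod_eq_of_lt (by omega)]
      omega
    · omega

theorem ZMod.card_filter_val_lt_and_val_add_lt {n d : ℕ} [NeZero n] (hdn : d ≤ n) (t : ZMod n) :
    #{u : ZMod n | u.val < d ∧ (u + t).val < d} = (d - t.val) + (d - (n - t.val)) := by
  calc #{u : ZMod n | u.val < d ∧ (u + t).val < d}
      = #{x ∈ range n | x < d ∧ (x + t.val) % n < d} := by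
        refine card_nbij' ZMod.val Nat.cast ?_ ?_ ?_ ?_
        · intro u hu
          simp_all [ZMod.val_lt, ← ZMod.val_add]
        · intro x hx
          simp_all [ZMod.val_add, Nat.mod_eq_of_lt]
        · intro u _
          exact ZMod.natCast_zmod_val u
        · intro x hx
          simp_all [Nat.mod_eq_of_lt]
    _ = #(range (d - t.val) ∪ Ico (n - t.val) d) := by
        rw [Nat.filter_range_lt_and_add_mod_lt hdn t.val_lt]
    _ = (d - t.val) + (d - (n - t.val)) := by
        have hdisj : Disjoint (range (d - t.val)) (Ico (n - t.val) d) := by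
          rw [disjoint_left]
          intro x hx hx'
          simp only [mem_range, mem_Ico] at hx hx'
          omega
        rw [card_union_of_disjoint hdisj, card_range, Nat.card_Ico]

theorem ZMod.val_eq_sub_one_iff {n : ℕ} [NeZero n] (a : ZMod n) : a.val = n - 1 ↔ a = -1 := by
  obtain ⟨m, rfl⟩ := Nat.exists_eq_succ_of_ne_zero (NeZero.ne n)
  rw [Nat.succ_sub_one, ← (ZMod.val_injective _).eq_iff, ZMod.val_neg_one]

theorem card_common_ones_Mcirc {n d : ℕ} [NeZero n] (hdn : d ≤ n) (j k : ZMod n) :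
    #{i | Mcirc n d i j ∧ Mcirc n d i k} = (d - (k - j).val) + (d - (n - (k - j).val)) := by
  rw [← ZMod.card_filter_val_lt_and_val_add_lt hdn]
  refine card_equiv (Equiv.subLeft j) fun i => ?_
  simp [Mcirc]

theorem card_common_ones_Mcirc_eq_iff {n d : ℕ} [NeZero n] (hd : 2 ≤ d) (hn : d + 2 ≤ n)
    {j k : ZMod n} (hjk : j ≠ k) :
    #{i | Mcirc n d i j ∧ Mcirc n d i k} = d - 1 ↔ k = j + 1 ∨ k = j - 1 := by
  have hsucc : k = j + 1 ↔ (k - j).val = 1 := by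
    rw [ZMod.val_eq_one (by omega), sub_eq_iff_eq_add']
  have hpred : k = j - 1 ↔ (k - j).val = n - 1 := by
    rw [ZMod.val_eq_sub_one_iff, sub_eq_iff_eq_add', ← sub_eq_add_neg]
  have hpos : 0 < (k - j).val := ZMod.val_pos.mpr (sub_ne_zero.mpr hjk.symm)
  have hlt : (k - j).val < n := ZMod.val_lt _
  rw [card_common_ones_Mcirc (by omega), hsucc, hpred]
  omega

/-- For `d ≥ 2` and `n ≥ d + 2`, two distinct columns `j, k` of the circulant `M(n,d)`
have exactly `d - 1` common ones iff `k = j + 1` or `k = j - 1` in `ZMod n`;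
consequently, the graph of columns with `d - 1` common ones is the `n`-cycle. -/
theorem stmt8 (n d : ℕ) [NeZero n] (hd : 2 ≤ d) (hn : d + 2 ≤ n) :
    (∀ j k : ZMod n, j ≠ k →
      ((univ.filter (fun i => Mcirc n d i j ∧ Mcirc n d i k)).card = d - 1 ↔
        (k = j + 1 ∨ k = j - 1))) ∧
    gammaZ n d (Mcirc n d) = zmodCycle n := by
  refine ⟨fun j k => card_common_ones_Mcirc_eq_iff hd hn, ?_⟩
  ext j k
  exact and_congr_right (card_common_ones_Mcirc_eq_iff hd hn)
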